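/- For a bivariate function f^c ∈ L²(P) with P = P_X × P_Y a product of probability measures and ∬ f^c dP = 0, the independent part f_ind^c = f_X^c + f_Y^c is the orthogonal projection of f^c onto the closed subspace V = {g(x) + h(y) : g ∈ L²(P_X), h ∈ L²(P_Y), ∫g dP_X = 0, ∫h dP_Y = 0} of L²(P); equivalently, for every element v ∈ V, ‖f^c − f_ind^c‖_{L²(P)} ≤ ‖f^c − v‖_{L²(P)}. -/

import Mathlib

open MeasureTheory

/-! The residual `f - f_ind` is orthogonal in `L²(P)` to every `G(x) + H(y)` with `G, H`
square integrable: integrating out `y` turns `∫ f · G(x)` into `∫ f_X · G`, while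
`∫ f_Y(y) G(x) = (∫ G) (∫ f_Y)` vanishes because `∫ f_Y = ∫ f = 0`. For `v ∈ V` the difference
`f_ind - v` is such a function (the marginals are in `L²` by Jensen's inequality), so Pythagoras
gives `‖f - v‖² = ‖f - f_ind‖² + ‖f_ind - v‖²`. -/

namespace MeasureTheory

variable {α β : Type*} [MeasurableSpace α] [MeasurableSpace β] {μ : Measure α} {ν : Measure β}

theorem sq_integral_le_integral_sq [IsProbabilityMeasure μ] {u : α → ℝ} (hu : Integrable u μ)
    (hu2 : Integrable (fun x => u x ^ 2) μ) : (∫ x, u x ∂μ) ^ 2 ≤ ∫ x, u x ^ 2 ∂μ :=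
  (even_two.convexOn_pow (𝕜 := ℝ)).map_integral_le (continuous_pow 2).continuousOn
    isClosed_univ (by simp) hu hu2

theorem integral_sq_le_integral_add_sq_of_integral_mul_eq_zero {A B : α → ℝ}
    (hA : MemLp A 2 μ) (hB : MemLp B 2 μ) (horth : ∫ x, A x * B x ∂μ = 0) :
    ∫ x, A x ^ 2 ∂μ ≤ ∫ x, (A x + B x) ^ 2 ∂μ := by
  have hAB : Integrable (fun x => 2 * (A x * B x)) μ := (hA.integrable_mul hB).const_mul 2
  have hA2AB : Integrable (fun x => A x ^ 2 + 2 * (A x * B x)) μ := hA.integrable_sq.add hAB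
  have hexpand : ∫ x, (A x + B x) ^ 2 ∂μ = ∫ x, A x ^ 2 ∂μ + ∫ x, B x ^ 2 ∂μ := by
    calc ∫ x, (A x + B x) ^ 2 ∂μ = ∫ x, A x ^ 2 + 2 * (A x * B x) + B x ^ 2 ∂μ := by
          congr 1; funext x; ring
      _ = _ := by
        rw [integral_add hA2AB hB.integrable_sq,
          integral_add hA.integrable_sq hAB, integral_const_mul, horth, mul_zero, add_zero]
  rw [hexpand]
  exact le_add_of_nonneg_right (integral_nonneg fun x => sq_nonneg (B x))

theorem MemLp.integral_prod_left_two [IsFiniteMeasure μ] [IsProbabilityMeasure ν]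
    {f : α × β → ℝ} (hf : MemLp f 2 (μ.prod ν)) : MemLp (fun x => ∫ y, f (x, y) ∂ν) 2 μ := by
  have hfm := hf.aestronglyMeasurable.integral_prod_right'
  refine (memLp_two_iff_integrable_sq hfm).mpr
    (hf.integrable_sq.integral_prod_left.mono' (hfm.pow 2) ?_)
  filter_upwards [(hf.integrable one_le_two).prod_right_ae, hf.integrable_sq.prod_right_ae]
    with x hx hx2
  rw [Real.norm_of_nonneg (sq_nonneg _)]
  exact sq_integral_le_integral_sq hx hx2

theorem MemLp.integral_prod_right_two [IsProbabilityMeasure μ] [IsFiniteMeasure ν]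
    {f : α × β → ℝ} (hf : MemLp f 2 (μ.prod ν)) : MemLp (fun y => ∫ x, f (x, y) ∂μ) 2 ν :=
  (hf.comp_measurePreserving Measure.measurePreserving_swap).integral_prod_left_two

theorem integral_mul_comp_fst_eq_integral_prod_left [SFinite μ] [SFinite ν] {f : α × β → ℝ}
    {G : α → ℝ} (hfG : Integrable (fun z => f z * G z.1) (μ.prod ν)) :
    ∫ z, f z * G z.1 ∂(μ.prod ν) = ∫ x, (∫ y, f (x, y) ∂ν) * G x ∂μ := by
  rw [integral_prod _ hfG]
  simp only [integral_mul_const]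

theorem integral_sub_integral_prod_left_mul_comp_fst [IsFiniteMeasure μ]
    [IsProbabilityMeasure ν] {f : α × β → ℝ} {G : α → ℝ} (hf : MemLp f 2 (μ.prod ν))
    (hG : MemLp G 2 μ) :
    ∫ z, (f z - ∫ y, f (z.1, y) ∂ν) * G z.1 ∂(μ.prod ν) = 0 := by
  have hfG : Integrable (fun z => f z * G z.1) (μ.prod ν) := hf.integrable_mul (hG.comp_fst ν)
  have hfXG : Integrable (fun z => (∫ y, f (z.1, y) ∂ν) * G z.1) (μ.prod ν) :=
    (hf.integral_prod_left_two.comp_fst ν).integrable_mul (hG.comp_fst ν)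
  simp_rw [sub_mul]
  rw [integral_sub hfG hfXG, integral_mul_comp_fst_eq_integral_prod_left hfG,
    integral_fun_fst (fun x => (∫ y, f (x, y) ∂ν) * G x)]
  simp

noncomputable def independentPart (μ : Measure α) (ν : Measure β) (f : α × β → ℝ)
    (z : α × β) : ℝ :=
  (∫ y, f (z.1, y) ∂ν) + ∫ x, f (x, z.2) ∂μ

theorem independentPart_comp_swap (f : α × β → ℝ) (z : β × α) :
    independentPart ν μ (f ∘ Prod.swap) z = independentPart μ ν f z.swap :=
  add_comm _ _

theorem MemLp.independentPart [IsProbabilityMeasure μ] [IsProbabilityMeasure ν]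
    {f : α × β → ℝ} (hf : MemLp f 2 (μ.prod ν)) : MemLp (independentPart μ ν f) 2 (μ.prod ν) :=
  (hf.integral_prod_left_two.comp_fst ν).add (hf.integral_prod_right_two.comp_snd μ)

theorem integral_sub_independentPart_mul_comp_fst [IsProbabilityMeasure μ]
    [IsProbabilityMeasure ν] {f : α × β → ℝ} (hf : MemLp f 2 (μ.prod ν))
    (hzero : ∫ z, f z ∂(μ.prod ν) = 0) {G : α → ℝ} (hG : MemLp G 2 μ) :
    ∫ z, (f z - independentPart μ ν f z) * G z.1 ∂(μ.prod ν) = 0 := by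
  have hfY0 : ∫ y, (∫ x, f (x, y) ∂μ) ∂ν = 0 :=
    (integral_prod_symm f (hf.integrable one_le_two)).symm.trans hzero
  have hsplit : (fun z => (f z - independentPart μ ν f z) * G z.1) =
      fun z => (f z - ∫ y, f (z.1, y) ∂ν) * G z.1 - G z.1 * ∫ x, f (x, z.2) ∂μ := by
    funext z; unfold independentPart; ring
  have hresG : Integrable (fun z => (f z - ∫ y, f (z.1, y) ∂ν) * G z.1) (μ.prod ν) :=
    (hf.sub (hf.integral_prod_left_two.comp_fst ν)).integrable_mul (hG.comp_fst ν)
  have hGfY : Integrable (fun z => G z.1 * ∫ x, f (x, z.2) ∂μ) (μ.prod ν) :=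
    (hG.integrable one_le_two).mul_prod (hf.integral_prod_right_two.integrable one_le_two)
  rw [hsplit, integral_sub hresG hGfY,
    integral_sub_integral_prod_left_mul_comp_fst hf hG,
    integral_prod_mul G (fun y => ∫ x, f (x, y) ∂μ), hfY0]
  ring

theorem integral_sub_independentPart_mul_comp_snd [IsProbabilityMeasure μ]
    [IsProbabilityMeasure ν] {f : α × β → ℝ} (hf : MemLp f 2 (μ.prod ν))
    (hzero : ∫ z, f z ∂(μ.prod ν) = 0) {H : β → ℝ} (hH : MemLp H 2 ν) :
    ∫ z, (f z - independentPart μ ν f z) * H z.2 ∂(μ.prod ν) = 0 := by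
  have hswap := integral_sub_independentPart_mul_comp_fst
    (hf.comp_measurePreserving Measure.measurePreserving_swap)
    ((integral_prod_swap f).trans hzero) hH
  rw [← integral_prod_swap]
  simp only [← independentPart_comp_swap]
  exact hswap

theorem integral_sub_independentPart_mul_add [IsProbabilityMeasure μ] [IsProbabilityMeasure ν]
    {f : α × β → ℝ} (hf : MemLp f 2 (μ.prod ν)) (hzero : ∫ z, f z ∂(μ.prod ν) = 0)
    {G : α → ℝ} {H : β → ℝ} (hG : MemLp G 2 μ) (hH : MemLp H 2 ν) :
    ∫ z, (f z - independentPart μ ν f z) * (G z.1 + H z.2) ∂(μ.prod ν) = 0 := by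
  have hres := hf.sub hf.independentPart
  have hresG : Integrable (fun z => (f z - independentPart μ ν f z) * G z.1) (μ.prod ν) :=
    hres.integrable_mul (hG.comp_fst ν)
  have hresH : Integrable (fun z => (f z - independentPart μ ν f z) * H z.2) (μ.prod ν) :=
    hres.integrable_mul (hH.comp_snd μ)
  simp_rw [mul_add]
  rw [integral_add hresG hresH, integral_sub_independentPart_mul_comp_fst hf hzero hG,
    integral_sub_independentPart_mul_comp_snd hf hzero hH, add_zero]

end MeasureTheory

/-- for product probability measures, the independent part
`f_ind^c = f_X^c + f_Y^c` is the best `L²(P)`-approximation of `f^c` among all elements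
of the subspace `V` of sums `g(x) + h(y)` of zero-integral square-integrable univariate
functions (i.e., it is the orthogonal projection of `f^c` onto `V`). -/
theorem independent_part_is_projection
    {α β : Type*} [MeasurableSpace α] [MeasurableSpace β]
    (μ : Measure α) (ν : Measure β) [IsProbabilityMeasure μ] [IsProbabilityMeasure ν]
    (f : α × β → ℝ) (hf : MemLp f 2 (μ.prod ν))
    (hzero : ∫ z, f z ∂(μ.prod ν) = 0) :
    ∀ g : α → ℝ, ∀ h : β → ℝ, MemLp g 2 μ → MemLp h 2 ν →
      (∫ x, g x ∂μ = 0) → (∫ y, h y ∂ν = 0) →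
      (∫ z, (f z - ((∫ y, f (z.1, y) ∂ν) + (∫ x, f (x, z.2) ∂μ))) ^ 2 ∂(μ.prod ν)) ≤
        ∫ z, (f z - (g z.1 + h z.2)) ^ 2 ∂(μ.prod ν) := by
  intro g h hg hh _ _
  set G : α → ℝ := fun x => (∫ y, f (x, y) ∂ν) - g x
  set H : β → ℝ := fun y => (∫ x, f (x, y) ∂μ) - h y
  have hG : MemLp G 2 μ := hf.integral_prod_left_two.sub hg
  have hH : MemLp H 2 ν := hf.integral_prod_right_two.sub hh
  calc ∫ z, (f z - independentPart μ ν f z) ^ 2 ∂(μ.prod ν)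
      ≤ ∫ z, ((f z - independentPart μ ν f z) + (G z.1 + H z.2)) ^ 2 ∂(μ.prod ν) :=
        integral_sq_le_integral_add_sq_of_integral_mul_eq_zero (hf.sub hf.independentPart)
          ((hG.comp_fst ν).add (hH.comp_snd μ))
          (integral_sub_independentPart_mul_add hf hzero hG hH)
    _ = ∫ z, (f z - (g z.1 + h z.2)) ^ 2 ∂(μ.prod ν) := by
        congr 1; funext z; simp only [independentPart, G, H]; ring
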